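/- arXiv:2107.01888 — 2 statements merged into one kernel-verified Lean document; each statement's English description precedes it below -/
import Mathlib

section
/- For every integer n ≥ 3 there exists a finite set R ⊂ ℝ such that for all nonzero real numbers a, b with a/b ∉ R, the degree of 𝓑_{a,b}^n (as a polynomial in X) equals (n²−1)/4 if n is odd and n²/4 − 1 if n is even. -/
/-- The k-th Taylor coefficient of √(1+t) at t = 0:
`c k = (−1)^(k+1)·(2k choose k)/(4^k·(2k−1))` (note `2k−1 = −1` when `k = 0`, so `c 0 = 1`). -/
noncomputable def sqrtCoeff (k : ℕ) : ℚ :=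
  (-1) ^ (k + 1) * (Nat.choose (2 * k) k : ℚ) / (4 ^ k * (2 * (k : ℚ) - 1))

/-- The polynomial `B_k^{a,b} = Σ_{u+v+w=k} c_u c_v c_w · a^{−u} b^{−v} · (a−X)^u (b−X)^v`. -/
noncomputable def Bpoly (a b : ℝ) (k : ℕ) : Polynomial ℝ :=
  ∑ u ∈ Finset.range (k + 1), ∑ v ∈ Finset.range (k + 1 - u),
    Polynomial.C ((sqrtCoeff u : ℝ) * (sqrtCoeff v : ℝ) * (sqrtCoeff (k - u - v) : ℝ)
        * a⁻¹ ^ u * b⁻¹ ^ v) *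
      (Polynomial.C a - Polynomial.X) ^ u * (Polynomial.C b - Polynomial.X) ^ v

/-- Cayley's determinant `𝓑_{a,b}^n`: for odd `n = 2m+1` it is the determinant of the
`m×m` matrix with `(i,j)` entry `B_{i+j}` (`1 ≤ i,j ≤ m`); for even `n = 2m` it is the
determinant of the `(m−1)×(m−1)` matrix with `(i,j)` entry `B_{i+j+1}` (`1 ≤ i,j ≤ m−1`). -/
noncomputable def cayleyPoly (a b : ℝ) (n : ℕ) : Polynomial ℝ :=
  if Odd n then
    Matrix.det (Matrix.of fun i j : Fin (n / 2) => Bpoly a b (i.val + j.val + 2))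
  else
    Matrix.det (Matrix.of fun i j : Fin (n / 2 - 1) => Bpoly a b (i.val + j.val + 3))

/-! Each `B_k` has degree at most `k`, and its coefficient of `X ^ k` is `(-1/a)^k g_k(a/b)`,
where `g_k(t)` is the coefficient of `x ^ k` in `√(1 + x) √(1 + t x)`. So the Hankel determinant
`det (B_{i+j+e+1})_{i,j<p}` has degree at most `p (p + e)`, with coefficient in that degree equal,
up to a nonzero factor, to the value at `a/b` of the polynomial `det (g_{i+j+e+1})`. Take `R` to be
its set of roots, with `(p, e) = (m, 1)` for `n = 2m+1` and `(m-1, 2)` for `n = 2m`.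

That polynomial is nonzero: at `t = 0` it is `det (c_{i+j+e+1})`, and since
`c_{k+1} = (-1)^k C_k / (2·4^k)` this is a rescaled Hankel determinant of Catalan numbers
`C_{i+j+e}`. Cutting a Dyck path of length `2(i+j+e)` after step `2i+e` shows that this Hankel
matrix is the Gram matrix `A Aᵀ`, where `A i h` counts the paths of `2i+e` steps `±1` from height
`0` to height `h` that stay nonnegative; and the columns `h = 2j+e` of `A` form a unitriangular
matrix. -/

open Polynomial Finset

theorem Equiv.Perm.sum_comp_add {n M : Type*} [Fintype n] [AddCommMonoid M] (σ : Equiv.Perm n)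
    (r c : n → M) : ∑ i, (r (σ i) + c i) = ∑ i, r i + ∑ i, c i := by
  rw [sum_add_distrib, Equiv.sum_comp σ r]

namespace Polynomial

theorem natDegree_prod_le_sum_of_le {R ι : Type*} [CommSemiring R] (s : Finset ι)
    (f : ι → R[X]) (d : ι → ℕ) (h : ∀ i ∈ s, (f i).natDegree ≤ d i) :
    (∏ i ∈ s, f i).natDegree ≤ ∑ i ∈ s, d i :=
  (natDegree_prod_le s f).trans (sum_le_sum h)

theorem coeff_prod_sum_of_natDegree_le {R ι : Type*} [CommSemiring R] (s : Finset ι)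
    (f : ι → R[X]) (d : ι → ℕ) (h : ∀ i ∈ s, (f i).natDegree ≤ d i) :
    (∏ i ∈ s, f i).coeff (∑ i ∈ s, d i) = ∏ i ∈ s, (f i).coeff (d i) := by
  induction s using Finset.cons_induction with
  | empty => simp
  | cons a s ha ih =>
    have hs : ∀ i ∈ s, (f i).natDegree ≤ d i := fun i hi => h i (mem_cons_of_mem hi)
    rw [prod_cons, sum_cons, coeff_mul_add_eq_of_natDegree_le (h a (mem_cons_self a s))
      (natDegree_prod_le_sum_of_le s f d hs), ih hs, prod_cons]

theorem coeff_C_sub_X_pow_self {R : Type*} [CommRing R] (a : R) (u : ℕ) :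
    ((C a - X) ^ u).coeff u = (-1) ^ u := by
  have h := coeff_pow_of_natDegree_le (p := C a - X) (m := u) (n := 1) (by compute_degree)
  rw [mul_one] at h
  simp [h]

theorem coeff_C_mul_C_sub_X_pow_mul_C_sub_X_pow {R : Type*} [CommRing R] (x a b : R)
    (u v : ℕ) :
    (C x * (C a - X) ^ u * (C b - X) ^ v).coeff (u + v) = x * (-1) ^ (u + v) := by
  rw [mul_assoc, coeff_C_mul, coeff_mul_add_eq_of_natDegree_le (by compute_degree)
    (by compute_degree), coeff_C_sub_X_pow_self, coeff_C_sub_X_pow_self, pow_add]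

end Polynomial

namespace Matrix

theorem det_mul_transpose_ne_zero {K m n : Type*} [Field K] [LinearOrder K]
    [IsStrictOrderedRing K] [Fintype m] [DecidableEq m] [Fintype n]
    (A : Matrix m n K) (f : m → n) (hf : (A.submatrix id f).det ≠ 0) :
    (A * Aᵀ).det ≠ 0 := by
  intro h
  obtain ⟨v, hv, hAv⟩ := exists_mulVec_eq_zero_iff.mpr h
  have hvA : v ᵥ* A = 0 := by
    have hker : v ∈ LinearMap.ker (Aᵀᵀ * Aᵀ).mulVecLin := by
      rwa [transpose_transpose, LinearMap.mem_ker, mulVecLin_apply]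
    rwa [ker_mulVecLin_transpose_mul_self, LinearMap.mem_ker, mulVecLin_apply,
      mulVec_transpose] at hker
  exact hf (exists_vecMul_eq_zero_iff.mp ⟨v, hv, funext fun j => congrFun hvA (f j)⟩)

theorem det_of_pow_mul_pow_mul_ne_zero {K : Type*} [Field K] {p : ℕ} {r : K} (hr : r ≠ 0)
    {κ : K} (hκ : κ ≠ 0) {M : Matrix (Fin p) (Fin p) K} (hM : M.det ≠ 0) :
    (of fun i j : Fin p => r ^ (i : ℕ) * (r ^ (j : ℕ) * (κ * M i j))).det ≠ 0 := by
  have h := det_mul_column (fun i : Fin p => r ^ (i : ℕ))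
    (of fun i j => r ^ (j : ℕ) * (κ * M i j))
  have h' := det_mul_row (fun j : Fin p => r ^ (j : ℕ)) (of fun i j => κ * M i j)
  simp only [of_apply] at h h'
  rw [h, h', show (of fun i j => κ * M i j) = κ • M from rfl, det_smul]
  have hprod : ∏ i : Fin p, r ^ (i : ℕ) ≠ 0 :=
    prod_ne_zero_iff.mpr fun i _ => pow_ne_zero _ hr
  exact mul_ne_zero hprod (mul_ne_zero hprod (mul_ne_zero (pow_ne_zero _ hκ) hM))

section

variable {R n : Type*} [CommRing R] [Fintype n] [DecidableEq n]

theorem natDegree_det_le_of_natDegree_le (M : Matrix n n R[X]) (r c : n → ℕ)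
    (h : ∀ i j, (M i j).natDegree ≤ r i + c j) :
    M.det.natDegree ≤ ∑ i, r i + ∑ j, c j := by
  rw [det_apply]
  refine natDegree_sum_le_of_forall_le _ _ fun σ _ => ?_
  rw [Units.smul_def, ← Equiv.Perm.sum_comp_add σ]
  exact (natDegree_smul_le _ _).trans
    (natDegree_prod_le_sum_of_le _ _ _ fun i _ => h (σ i) i)

theorem coeff_det_of_natDegree_le (M : Matrix n n R[X]) (r c : n → ℕ)
    (h : ∀ i j, (M i j).natDegree ≤ r i + c j) :
    M.det.coeff (∑ i, r i + ∑ j, c j) = (of fun i j => (M i j).coeff (r i + c j)).det := by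
  rw [det_apply, det_apply, finsetSum_coeff]
  refine sum_congr rfl fun σ _ => ?_
  rw [Units.smul_def, Units.smul_def, coeff_smul, ← Equiv.Perm.sum_comp_add σ,
    coeff_prod_sum_of_natDegree_le _ _ _ fun i _ => h (σ i) i]
  rfl

end

end Matrix

/-- The number of paths of `s` steps `±1` from height `0` to height `h` that never go below
height `0`, counted by their last step. -/
def pathCount : ℕ → ℕ → ℕ
  | 0, 0 => 1
  | 0, _ + 1 => 0
  | s + 1, 0 => pathCount s 1
  | s + 1, h + 1 => pathCount s h + pathCount s (h + 2)

theorem pathCount_eq_zero_of_lt : ∀ {s h : ℕ}, s < h → pathCount s h = 0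
  | 0, _ + 1, _ => rfl
  | s + 1, h + 1, hlt => by
    rw [pathCount, pathCount_eq_zero_of_lt (by omega), pathCount_eq_zero_of_lt (by omega)]

theorem pathCount_self : ∀ s : ℕ, pathCount s s = 1
  | 0 => rfl
  | s + 1 => by rw [pathCount, pathCount_self s, pathCount_eq_zero_of_lt (by omega)]

theorem sum_pathCount_succ_mul {x y K : ℕ} (hy : y ≤ K) :
    ∑ h ∈ range (K + 1), pathCount (x + 1) h * pathCount y h =
      ∑ h ∈ range (K + 1), pathCount x h * pathCount y (h + 1) +
        ∑ h ∈ range (K + 1), pathCount x (h + 1) * pathCount y h := by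
  rw [sum_range_succ' (fun h => pathCount (x + 1) h * pathCount y h),
    sum_range_succ (fun h => pathCount x h * pathCount y (h + 1)),
    sum_range_succ' (fun h => pathCount x (h + 1) * pathCount y h),
    pathCount_eq_zero_of_lt (show y < K + 1 by omega)]
  simp only [pathCount, add_mul, sum_add_distrib, mul_zero, add_zero]
  ring

theorem sum_pathCount_succ_mul_comm {s t K : ℕ} (hs : s ≤ K) (ht : t ≤ K) :
    ∑ h ∈ range (K + 1), pathCount (s + 1) h * pathCount t h =
      ∑ h ∈ range (K + 1), pathCount s h * pathCount (t + 1) h := by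
  conv_rhs => rw [sum_congr rfl fun h _ => mul_comm (pathCount s h) _, sum_pathCount_succ_mul hs]
  rw [sum_pathCount_succ_mul ht, add_comm]
  congr 1 <;> exact sum_congr rfl fun h _ => mul_comm _ _

/-- Gluing a path to the reverse of another one. -/
theorem sum_pathCount_mul_pathCount : ∀ {s t K : ℕ}, s + t ≤ K →
    ∑ h ∈ range (K + 1), pathCount s h * pathCount t h = pathCount (s + t) 0
  | 0, t, K, _ => by
    rw [sum_eq_single_of_mem 0 (mem_range.mpr (Nat.succ_pos K))
      fun h _ hh => by rw [pathCount_eq_zero_of_lt (Nat.pos_of_ne_zero hh), zero_mul]]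
    simp [pathCount]
  | s + 1, t, K, hle => by
    rw [sum_pathCount_succ_mul_comm (by omega) (by omega),
      sum_pathCount_mul_pathCount (by omega), Nat.add_right_comm, Nat.add_assoc]

theorem pathCount_eq_choose_sub_choose : ∀ {s h m : ℕ}, s + h = 2 * m →
    (pathCount s h : ℤ) = s.choose m - s.choose (m + 1)
  | 0, 0, 0, _ => by simp [pathCount]
  | 0, h + 1, m, heq => by
    obtain ⟨m, rfl⟩ : ∃ m', m = m' + 1 := ⟨m - 1, by omega⟩
    simp [pathCount]
  | s + 1, h, 0, heq => by omega
  | s + 1, 0, m + 1, heq => by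
    have hsym : s.choose (m + 1) = s.choose m := by
      rw [show s = 2 * m + 1 by omega, Nat.choose_symm_half]
    rw [pathCount, pathCount_eq_choose_sub_choose (m := m + 1) (by omega),
      Nat.choose_succ_succ, Nat.choose_succ_succ]
    push_cast
    rw [hsym]
    ring
  | s + 1, h + 1, m + 1, heq => by
    rw [pathCount, Nat.cast_add, pathCount_eq_choose_sub_choose (m := m) (by omega),
      pathCount_eq_choose_sub_choose (m := m + 1) (by omega),
      Nat.choose_succ_succ, Nat.choose_succ_succ]
    push_cast
    ring

theorem pathCount_two_mul_zero (k : ℕ) : pathCount (2 * k) 0 = catalan k := by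
  have hcat := succ_mul_catalan_eq_centralBinom k
  have hnext := Nat.choose_succ_right_eq (2 * k) k
  rw [Nat.centralBinom_eq_two_mul_choose] at hcat
  rw [show 2 * k - k = k by omega] at hnext
  have hdiff := pathCount_eq_choose_sub_choose (s := 2 * k) (h := 0) (m := k) (by omega)
  have hk : ((k : ℤ) + 1) ≠ 0 := by positivity
  apply Nat.cast_injective (R := ℤ)
  apply mul_left_cancel₀ hk
  rw [hdiff]
  zify at hcat hnext
  linear_combination -hnext - hcat

open Matrix in
theorem det_hankel_catalan_ne_zero {K : Type*} [Field K] [LinearOrder K] [IsStrictOrderedRing K]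
    (p e : ℕ) : (of fun i j : Fin p => (catalan (i + j + e) : K)).det ≠ 0 := by
  let A : Matrix (Fin p) (Fin (4 * p + 2 * e + 1)) K :=
    of fun i h => (pathCount (2 * i + e) h : K)
  have hgram : (of fun i j : Fin p => (catalan (i + j + e) : K)) = A * Aᵀ := by
    ext i j
    simp only [of_apply, mul_apply, transpose_apply, A]
    rw [Fin.sum_univ_eq_sum_range
      (fun h => (pathCount (2 * i + e) h : K) * pathCount (2 * j + e) h)]
    rw_mod_cast [sum_pathCount_mul_pathCount (by omega), ← pathCount_two_mul_zero]
    congr 1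
    ring
  rw [hgram]
  refine det_mul_transpose_ne_zero A (fun i => ⟨2 * i + e, by omega⟩) ?_
  rw [det_of_isLowerTriangular _ fun i j (hij : i < j) => ?_]
  · simp [A, pathCount_self]
  · simpa [A] using pathCount_eq_zero_of_lt (by omega)

theorem sqrtCoeff_zero : sqrtCoeff 0 = 1 := by norm_num [sqrtCoeff]

theorem sqrtCoeff_succ (k : ℕ) : sqrtCoeff (k + 1) = (-1) ^ k * catalan k / (2 * 4 ^ k) := by
  have hcat : ((k + 1) * catalan k : ℚ) = (2 * k).choose k := by
    exact_mod_cast succ_mul_catalan_eq_centralBinom k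
  have hnext :
      ((k + 1) * (2 * (k + 1)).choose (k + 1) : ℚ) = 2 * (2 * k + 1) * (2 * k).choose k := by
    exact_mod_cast Nat.succ_mul_centralBinom_succ k
  rw [sqrtCoeff]
  push_cast
  rw [show 2 * ((k : ℚ) + 1) - 1 = 2 * k + 1 by ring]
  field_simp
  apply mul_left_cancel₀ (show (k + 1 : ℚ) ≠ 0 by positivity)
  linear_combination (-1) ^ k * 2 * 4 ^ k * hnext - (-1) ^ k * 4 ^ k * 4 * (2 * k + 1) * hcat

open Matrix in
theorem det_hankel_sqrtCoeff_ne_zero (p e : ℕ) :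
    (of fun i j : Fin p => (sqrtCoeff (i + j + e + 1) : ℝ)).det ≠ 0 := by
  have hcat : (of fun i j : Fin p => (sqrtCoeff (i + j + e + 1) : ℝ)) = of fun i j : Fin p =>
      (-4⁻¹ : ℝ) ^ (i : ℕ) *
        ((-4⁻¹) ^ (j : ℕ) * ((-1) ^ e / (2 * 4 ^ e) * catalan (i + j + e))) := by
    ext i j
    rw [of_apply, of_apply, sqrtCoeff_succ]
    push_cast
    rw [neg_pow (4⁻¹ : ℝ), neg_pow (4⁻¹ : ℝ), inv_pow, inv_pow]
    field_simp
    ring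
  rw [hcat]
  exact det_of_pow_mul_pow_mul_ne_zero (by norm_num) (by simp) (det_hankel_catalan_ne_zero p e)

/-- The coefficient of `x ^ k` in `√(1 + x) · √(1 + t x)`, as a polynomial in `t`. -/
noncomputable def sqrtProdCoeff (k : ℕ) : ℝ[X] :=
  ∑ u ∈ range (k + 1), C ((sqrtCoeff u : ℝ) * sqrtCoeff (k - u)) * X ^ (k - u)

theorem sqrtProdCoeff_eval_zero (k : ℕ) : (sqrtProdCoeff k).eval 0 = sqrtCoeff k := by
  rw [sqrtProdCoeff, eval_finsetSum, sum_eq_single_of_mem k (self_mem_range_succ k)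
    fun u hu hne => by simp [zero_pow (show k - u ≠ 0 by grind)]]
  simp [sqrtCoeff_zero]

noncomputable def sqrtProdHankel (p e : ℕ) : ℝ[X] :=
  (Matrix.of fun i j : Fin p => sqrtProdCoeff (i + j + e + 1)).det

theorem sqrtProdHankel_eval (p e : ℕ) (t : ℝ) : (sqrtProdHankel p e).eval t =
    (Matrix.of fun i j : Fin p => (sqrtProdCoeff (i + j + e + 1)).eval t).det := by
  rw [sqrtProdHankel, ← coe_evalRingHom, RingHom.map_det]
  rfl

theorem sqrtProdHankel_ne_zero (p e : ℕ) : sqrtProdHankel p e ≠ 0 := by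
  intro h
  have h0 := sqrtProdHankel_eval p e 0
  simp only [h, eval_zero, sqrtProdCoeff_eval_zero] at h0
  exact det_hankel_sqrtCoeff_ne_zero p e h0.symm

theorem natDegree_Bpoly_le (a b : ℝ) (k : ℕ) : (Bpoly a b k).natDegree ≤ k := by
  refine natDegree_sum_le_of_forall_le _ _ fun u hu => natDegree_sum_le_of_forall_le _ _
    fun v hv => ?_
  have huv : u + v ≤ k := by grind
  exact le_trans (by compute_degree) huv

theorem coeff_Bpoly_self {a : ℝ} (ha : a ≠ 0) (b : ℝ) (k : ℕ) :
    (Bpoly a b k).coeff k = (-a⁻¹) ^ k * (sqrtProdCoeff k).eval (a / b) := by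
  rw [Bpoly, finsetSum_coeff, sqrtProdCoeff, eval_finsetSum, mul_sum]
  refine sum_congr rfl fun u hu => ?_
  obtain ⟨w, rfl⟩ : ∃ w, k = u + w := ⟨k - u, by grind⟩
  rw [finsetSum_coeff, sum_eq_single_of_mem w (by grind) fun v hv hne =>
    coeff_eq_zero_of_natDegree_lt
      (lt_of_le_of_lt (by compute_degree) (show u + v < u + w by grind))]
  rw [coeff_C_mul_C_sub_X_pow_mul_C_sub_X_pow, add_tsub_cancel_left, tsub_self, sqrtCoeff_zero]
  simp only [eval_mul, eval_C, eval_pow, eval_X, neg_pow a⁻¹, inv_pow, div_pow, pow_add]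
  field_simp
  ring

theorem sum_fin_val_add_sum_fin_val_add (p e : ℕ) :
    ∑ i : Fin p, (i : ℕ) + ∑ j : Fin p, ((j : ℕ) + e + 1) = p * (p + e) := by
  rw [Fin.sum_univ_eq_sum_range (fun i => i) p,
    Fin.sum_univ_eq_sum_range (fun j => j + e + 1) p]
  induction p with
  | zero => simp
  | succ q ih =>
    rw [sum_range_succ, sum_range_succ]
    linarith

theorem natDegree_det_hankel_Bpoly {a : ℝ} (ha : a ≠ 0) (b : ℝ) (p e : ℕ)
    (h : (sqrtProdHankel p e).eval (a / b) ≠ 0) :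
    (Matrix.of fun i j : Fin p => Bpoly a b (i + j + e + 1)).det.natDegree = p * (p + e) := by
  have hdeg : ∀ i j : Fin p, (Bpoly a b (i + j + e + 1)).natDegree ≤ i + ((j : ℕ) + e + 1) :=
    fun i j => (natDegree_Bpoly_le a b _).trans_eq (by ring)
  rw [← sum_fin_val_add_sum_fin_val_add p e]
  refine le_antisymm (Matrix.natDegree_det_le_of_natDegree_le _ _ _ hdeg)
    (le_natDegree_of_ne_zero ?_)
  rw [Matrix.coeff_det_of_natDegree_le (Matrix.of fun i j : Fin p => Bpoly a b (i + j + e + 1))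
    _ _ hdeg]
  have htop : (Matrix.of fun i j : Fin p =>
        (Bpoly a b (i + j + e + 1)).coeff (i + ((j : ℕ) + e + 1))) =
      Matrix.of fun i j : Fin p => (-a⁻¹) ^ (i : ℕ) * ((-a⁻¹) ^ (j : ℕ) *
        ((-a⁻¹) ^ (e + 1) * (sqrtProdCoeff (i + j + e + 1)).eval (a / b))) := by
    ext i j
    rw [Matrix.of_apply, Matrix.of_apply, ← add_assoc, ← add_assoc, coeff_Bpoly_self ha]
    ring
  simp only [Matrix.of_apply]
  rw [htop]
  rw [sqrtProdHankel_eval] at h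
  exact Matrix.det_of_pow_mul_pow_mul_ne_zero (by simpa using ha) (by simpa using ha) h

theorem exists_natDegree_det_hankel_Bpoly (p e : ℕ) :
    ∃ R : Finset ℝ, ∀ a b : ℝ, a ≠ 0 → a / b ∉ R →
      (Matrix.of fun i j : Fin p => Bpoly a b (i + j + e + 1)).det.natDegree = p * (p + e) :=
  ⟨(sqrtProdHankel p e).roots.toFinset, fun _ b ha hab => natDegree_det_hankel_Bpoly ha b p e
    fun hroot => hab <| Multiset.mem_toFinset.mpr <|
      (mem_roots (sqrtProdHankel_ne_zero p e)).mpr hroot⟩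

theorem cayleyPoly_natDegree_generic_general (n : ℕ) :
    ∃ R : Finset ℝ, ∀ a b : ℝ, a ≠ 0 → b ≠ 0 → a / b ∉ R →
      (cayleyPoly a b n).natDegree = if Odd n then (n ^ 2 - 1) / 4 else n ^ 2 / 4 - 1 := by
  obtain ⟨m, rfl | rfl⟩ := Nat.even_or_odd' n
  · obtain ⟨R, hR⟩ := exists_natDegree_det_hankel_Bpoly (m - 1) 2
    refine ⟨R, fun a b ha _ hab => ?_⟩
    have heven : ¬Odd (2 * m) := Nat.not_odd_iff_even.mpr (even_two_mul m)
    rw [cayleyPoly, if_neg heven, if_neg heven, show 2 * m / 2 - 1 = m - 1 by omega]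
    refine (hR a b ha hab).trans ?_
    rcases m with _ | q
    · rfl
    · rw [show (2 * (q + 1)) ^ 2 = 4 * (q * (q + 2) + 1) by ring,
        Nat.mul_div_cancel_left _ four_pos]
      rfl
  · obtain ⟨R, hR⟩ := exists_natDegree_det_hankel_Bpoly m 1
    refine ⟨R, fun a b ha _ hab => ?_⟩
    have hodd : Odd (2 * m + 1) := odd_two_mul_add_one m
    rw [cayleyPoly, if_pos hodd, if_pos hodd, show (2 * m + 1) / 2 = m by omega]
    refine (hR a b ha hab).trans ?_
    rw [show (2 * m + 1) ^ 2 - 1 = 4 * (m * (m + 1)) by ring_nf; omega,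
      Nat.mul_div_cancel_left _ four_pos]

/-- Generic degree of Cayley's determinant (Proposition 2.22): for each `n ≥ 3` there is a
finite set `R ⊂ ℝ` such that whenever `a, b ≠ 0` and `a/b ∉ R`, the degree of `𝓑_{a,b}^n`
equals `(n²−1)/4` if `n` is odd and `n²/4 − 1` if `n` is even. -/
theorem cayleyPoly_natDegree_generic (n : ℕ) (hn : 3 ≤ n) :
    ∃ R : Finset ℝ, ∀ a b : ℝ, a ≠ 0 → b ≠ 0 → a / b ∉ R →
      (cayleyPoly a b n).natDegree = if Odd n then (n ^ 2 - 1) / 4 else n ^ 2 / 4 - 1 :=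
  cayleyPoly_natDegree_generic_general n
end

section
/- For every nonzero real number a and every integer n ≥ 3, the degree of 𝓑_{a,a}^n (the case of the circle, a = b) equals (n−1)/2 if n is odd and n/2 − 1 if n is even. -/
/-!
For `a = b` the double sum defining `B_k` collapses: grouping the terms by `s = u + v`, the
inner sums `∑ c_u c_{s-u}` are the coefficients of `(√(1+t))² = 1 + t`, so
`B_{k+1} = c_{k+1} + c_k (1 - X/a)` is linear in `X`. Hence `𝓑_{a,a}^n = det (A + X B)` with
`B = -a⁻¹ (c_{i+j+e+1})`, `e ∈ {0, 1}` the parity of `n + 1`, and its degree is the size of the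
matrix as soon as `det B ≠ 0`. Since `c_{k+1} = (-1/4)^k C_k / 2`, `B` is a diagonal rescaling of
the Catalan Hankel matrix `(C_{i+j+e})`, which is `L Lᵀ` for the unitriangular matrix `L` of
ballot numbers (a closed nonnegative path of length `N + M` splits at time `N`), so it has
determinant `1`.
-/

open Finset Polynomial

lemma succ_mul_sqrtCoeff_succ (k : ℕ) :
    (k + 1) * sqrtCoeff (k + 1) = sqrtCoeff k * (1 / 2 - k) := by
  have hcb : ((k + 1 : ℕ) : ℚ) * (k + 1).centralBinom = 2 * (2 * k + 1) * k.centralBinom := by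
    exact_mod_cast Nat.succ_mul_centralBinom_succ k
  have hk : (k : ℚ) * 2 - 1 ≠ 0 := sub_ne_zero.mpr (by exact_mod_cast (by omega : k * 2 ≠ 1))
  simp only [sqrtCoeff, ← Nat.centralBinom_eq_two_mul_choose]
  push_cast at hcb ⊢
  rw [show 2 * ((k : ℚ) + 1) - 1 = 2 * k + 1 by ring,
    show (1 / 2 : ℚ) - k = -(2 * k - 1) / 2 by ring]
  field_simp
  linear_combination (-1) ^ k * 2 * 4 ^ k * hcb

lemma sqrtCoeff_eq_choose (k : ℕ) : sqrtCoeff k = Ring.choose (1 / 2 : ℚ) k := by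
  induction k with
  | zero => norm_num [sqrtCoeff, Ring.choose_zero_right]
  | succ k ih =>
    have h := Ring.choose_smul_choose (1 / 2 : ℚ) (Nat.le_succ k)
    rw [Nat.choose_succ_self_right, Nat.succ_eq_add_one, Nat.add_sub_cancel_left,
      Ring.choose_one_right, nsmul_eq_mul, ← ih, ← succ_mul_sqrtCoeff_succ] at h
    push_cast at h
    exact mul_left_cancel₀ (by positivity) h.symm

lemma sum_antidiagonal_sqrtCoeff_mul (s : ℕ) :
    ∑ ij ∈ antidiagonal s, sqrtCoeff ij.1 * sqrtCoeff ij.2 = (Nat.choose 1 s : ℚ) := by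
  simp_rw [sqrtCoeff_eq_choose,
    ← Ring.add_choose_eq s (Commute.all (1 / 2 : ℚ) (1 / 2)), ← Ring.choose_natCast]
  norm_num

lemma sum_sqrtCoeff_mul_mul_pow {R : Type*} [CommRing R] (f : ℚ →+* R) (y : R) (k : ℕ) :
    ∑ u ∈ range (k + 2), ∑ v ∈ range (k + 2 - u),
      f (sqrtCoeff u * sqrtCoeff v * sqrtCoeff (k + 1 - u - v)) * y ^ (u + v)
      = f (sqrtCoeff (k + 1)) + f (sqrtCoeff k) * y := by
  have hdiag : ∀ s, ∑ j ∈ range (s + 1),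
      f (sqrtCoeff j * sqrtCoeff (s - j) * sqrtCoeff (k + 1 - j - (s - j))) * y ^ (j + (s - j))
      = f ((Nat.choose 1 s : ℚ) * sqrtCoeff (k + 1 - s)) * y ^ s := by
    intro s
    rw [← sum_antidiagonal_sqrtCoeff_mul, Nat.sum_antidiagonal_eq_sum_range_succ_mk, sum_mul,
      map_sum, sum_mul]
    refine sum_congr rfl fun j hj => ?_
    rw [mem_range] at hj
    rw [Nat.add_sub_cancel' (by omega), Nat.sub_sub, Nat.add_sub_cancel' (by omega)]
  rw [← sum_range_diag_flip, sum_congr rfl fun s _ => hdiag s, sum_range_succ', sum_range_succ']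
  simp [Nat.choose_eq_zero_of_lt, add_comm]

lemma Bpoly_self_succ {a : ℝ} (ha : a ≠ 0) (k : ℕ) :
    Bpoly a a (k + 1)
      = X * C (-(sqrtCoeff k : ℝ) * a⁻¹) + C ((sqrtCoeff (k + 1) : ℝ) + sqrtCoeff k) := by
  let f : ℚ →+* ℝ[X] := C.comp (Rat.castHom ℝ)
  have hterm : ∀ u v,
      C ((sqrtCoeff u : ℝ) * sqrtCoeff v * sqrtCoeff (k + 1 - u - v) * a⁻¹ ^ u * a⁻¹ ^ v) *
        (C a - X) ^ u * (C a - X) ^ v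
      = f (sqrtCoeff u * sqrtCoeff v * sqrtCoeff (k + 1 - u - v)) *
        (C a⁻¹ * (C a - X)) ^ (u + v) := by
    intro u v
    simp only [f, RingHom.comp_apply, Rat.coe_castHom, Rat.cast_mul, C_mul, C_pow, pow_add,
      mul_pow]
    ring
  rw [Bpoly, sum_congr rfl fun u _ => sum_congr rfl fun v _ => hterm u v,
    sum_sqrtCoeff_mul_mul_pow, mul_sub, ← C_mul, inv_mul_cancel₀ ha, C_1]
  simp only [f, RingHom.comp_apply, Rat.coe_castHom, C_mul, C_neg, C_add]
  ring

def walkCount : ℕ → ℤ → ℕ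
  | 0, h => if h = 0 then 1 else 0
  | N + 1, h => walkCount N (h - 1) + walkCount N (h + 1)

lemma walkCount_eq_zero_of_lt_abs {N : ℕ} {h : ℤ} (hh : (N : ℤ) < |h|) : walkCount N h = 0 := by
  induction N generalizing h with
  | zero => simpa [walkCount] using hh
  | succ N ih =>
    rw [walkCount, ih, ih] <;> rw [lt_abs] at hh ⊢ <;> push_cast at hh <;> omega

lemma walkCount_eq_zero_of_emod {N : ℕ} {h : ℤ} (hh : (N + h) % 2 = 1) : walkCount N h = 0 := by
  induction N generalizing h with
  | zero => simp [walkCount]; omega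
  | succ N ih => rw [walkCount, ih, ih] <;> push_cast at hh <;> omega

lemma walkCount_sub_two_mul (N j : ℕ) : walkCount N (N - 2 * j) = N.choose j := by
  induction N generalizing j with
  | zero => cases j <;> simp [walkCount]; omega
  | succ N ih =>
    rw [walkCount]
    cases j with
    | zero =>
      have h0 := ih 0
      simp only [Nat.cast_zero, mul_zero, sub_zero, Nat.choose_zero_right] at h0 ⊢
      rw [Nat.cast_succ, add_sub_cancel_right, h0,
        walkCount_eq_zero_of_lt_abs (lt_abs.mpr (Or.inl (by omega)))]
    | succ j =>
      rw [show ((N + 1 : ℕ) : ℤ) - 2 * (j + 1 : ℕ) - 1 = N - 2 * (j + 1 : ℕ) by push_cast; ring,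
        show ((N + 1 : ℕ) : ℤ) - 2 * (j + 1 : ℕ) + 1 = N - 2 * j by push_cast; ring,
        ih, ih, Nat.choose_succ_succ, add_comm]

/-- By the reflection principle, for `h ≥ 0` this counts the walks of `walkCount N h` that never
go below height `0`. -/
def ballot (N : ℕ) (h : ℤ) : ℤ := walkCount N h - walkCount N (-2 - h)

lemma ballot_succ (N : ℕ) (h : ℤ) : ballot (N + 1) h = ballot N (h - 1) + ballot N (h + 1) := by
  simp only [ballot, walkCount]
  rw [show -2 - h - 1 = -2 - (h + 1) by ring, show -2 - h + 1 = -2 - (h - 1) by ring]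
  push_cast
  ring

lemma ballot_neg_one (N : ℕ) : ballot N (-1) = 0 := by
  simp [ballot]

lemma ballot_eq_zero_of_lt {N : ℕ} {h : ℤ} (hh : (N : ℤ) < h) : ballot N h = 0 := by
  rw [ballot, walkCount_eq_zero_of_lt_abs (lt_abs.mpr (Or.inl hh)),
    walkCount_eq_zero_of_lt_abs (lt_abs.mpr (Or.inr (by omega)))]
  rfl

lemma ballot_eq_zero_of_emod {N : ℕ} {h : ℤ} (hh : (N + h) % 2 = 1) : ballot N h = 0 := by
  rw [ballot, walkCount_eq_zero_of_emod hh, walkCount_eq_zero_of_emod (by omega)]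
  rfl

lemma ballot_self (N : ℕ) : ballot N N = 1 := by
  rw [ballot, walkCount_eq_zero_of_lt_abs (h := -2 - N) (by rw [lt_abs]; omega)]
  simpa using walkCount_sub_two_mul N 0

lemma ballot_zero_left (h : ℕ) : ballot 0 h = if h = 0 then 1 else 0 := by
  simp [ballot, walkCount]
  omega

lemma ballot_two_mul_zero (k : ℕ) : ballot (2 * k) 0 = catalan k := by
  have hW := walkCount_sub_two_mul (2 * k) k
  have hW' := walkCount_sub_two_mul (2 * k) (k + 1)
  push_cast at hW hW'
  rw [show (2 * k : ℤ) - 2 * k = 0 by ring] at hW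
  rw [show (2 * k : ℤ) - 2 * (k + 1) = -2 - 0 by ring] at hW'
  have hcat : ((k + 1) * catalan k : ℤ) = (2 * k).choose k := by
    exact_mod_cast
      (succ_mul_catalan_eq_centralBinom k).trans (Nat.centralBinom_eq_two_mul_choose k)
  have hsucc : ((2 * k).choose (k + 1) * (k + 1) : ℤ) = (2 * k).choose k * k := by
    exact_mod_cast
      (Nat.choose_succ_right_eq (2 * k) k).trans (by rw [Nat.two_mul, Nat.add_sub_cancel])
  rw [ballot, hW, hW']
  exact mul_left_cancel₀ (by positivity : (k : ℤ) + 1 ≠ 0) (by linear_combination -hsucc - hcat)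

lemma sum_ballot_pred_mul_ballot (N : ℕ) {M K : ℕ} (hK : M < K) :
    ∑ h ∈ range K, ballot N (h - 1) * ballot M h
      = ∑ h ∈ range K, ballot N h * ballot M (h + 1) := by
  obtain ⟨K, rfl⟩ : ∃ K', K = K' + 1 := ⟨K - 1, by omega⟩
  rw [sum_range_succ', sum_range_succ, ballot_eq_zero_of_lt (h := (K : ℤ) + 1) (by omega)]
  simp [ballot_neg_one]

lemma sum_ballot_succ_mul_ballot (N : ℕ) {M K : ℕ} (hK : N + M + 1 < K) :
    ∑ h ∈ range K, ballot (N + 1) h * ballot M h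
      = ∑ h ∈ range K, ballot N h * ballot (M + 1) h := by
  simp only [ballot_succ, add_mul, mul_add, sum_add_distrib]
  rw [sum_ballot_pred_mul_ballot N (by omega : M < K), add_comm]
  congr 1
  simpa only [mul_comm] using (sum_ballot_pred_mul_ballot M (by omega : N < K)).symm

lemma sum_ballot_mul_ballot {N M K : ℕ} (hK : N + M < K) :
    ∑ h ∈ range K, ballot N h * ballot M h = ballot (N + M) 0 := by
  induction N generalizing M with
  | zero =>
    rw [sum_eq_single_of_mem 0 (mem_range.mpr (by omega))
      fun h _ hh => by simp [ballot_zero_left, hh], ballot_self, one_mul, zero_add, Nat.cast_zero]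
  | succ N ih =>
    rw [sum_ballot_succ_mul_ballot N (by omega), ih (by omega), Nat.add_right_comm, add_assoc]

open Matrix

def ballotMatrix (e m : ℕ) : Matrix (Fin m) (Fin m) ℤ :=
  of fun i k => ballot (2 * i + e) (2 * k + e)

lemma det_ballotMatrix (e m : ℕ) : (ballotMatrix e m).det = 1 := by
  rw [det_of_isLowerTriangular (ballotMatrix e m) fun i k hik =>
    ballot_eq_zero_of_lt (by have : (i : ℕ) < k := hik; push_cast; omega)]
  exact prod_eq_one fun i _ => by exact_mod_cast ballot_self (2 * i + e)

lemma sum_range_ballot_mul_eq_sum_two_mul_add {e : ℕ} (he : e ≤ 1) (N M : ℕ) {m K : ℕ}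
    (hN : N < 2 * m) (hK : 2 * m ≤ K) (hNe : N % 2 = e) :
    ∑ h ∈ range K, ballot N h * ballot M h
      = ∑ k ∈ range m, ballot N (2 * k + e : ℕ) * ballot M (2 * k + e : ℕ) := by
  refine ((sum_subset (s₁ := (range m).image fun k => 2 * k + e) (fun h hh => ?_)
    fun h hh hnot => ?_).symm.trans (sum_image fun _ _ _ _ hk => by simp at hk; omega))
  · simp only [mem_image, mem_range] at hh ⊢
    omega
  · simp only [mem_image, mem_range, not_exists, not_and] at hh hnot
    by_cases hpar : h % 2 = e
    · rw [ballot_eq_zero_of_lt (by have := hnot (h / 2); omega), zero_mul]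
    · rw [ballot_eq_zero_of_emod (by omega), zero_mul]

lemma catalan_hankel_eq_mul_transpose {e : ℕ} (he : e ≤ 1) (m : ℕ) :
    (of fun i j : Fin m => (catalan (i + j + e) : ℤ))
      = ballotMatrix e m * (ballotMatrix e m)ᵀ := by
  ext i j
  rw [mul_apply, of_apply, ← ballot_two_mul_zero,
    show 2 * ((i : ℕ) + j + e) = (2 * i + e) + (2 * j + e) by ring,
    ← sum_ballot_mul_ballot (K := 4 * m) (by omega),
    sum_range_ballot_mul_eq_sum_two_mul_add he _ _ (m := m) (by omega) (by omega) (by omega)]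
  exact (Fin.sum_univ_eq_sum_range (fun k => ballot (2 * i + e) (2 * k + e : ℕ) *
    ballot (2 * j + e) (2 * k + e : ℕ)) m).symm

theorem det_catalan_hankel {R : Type*} [CommRing R] {e : ℕ} (he : e ≤ 1) (m : ℕ) :
    (of fun i j : Fin m => (catalan (i + j + e) : R)).det = 1 := by
  have h := congrArg (Int.castRingHom R) (congrArg det (catalan_hankel_eq_mul_transpose he m))
  rw [det_mul, det_transpose, det_ballotMatrix, mul_one, map_one, RingHom.map_det] at h
  convert h
  ext i j
  simp

lemma sqrtCoeff_succ_eq_catalan (k : ℕ) : sqrtCoeff (k + 1) = (-1 / 4) ^ k * catalan k / 2 := by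
  have hcb : ((k + 1 : ℕ) : ℚ) * (k + 1).centralBinom = 2 * (2 * k + 1) * k.centralBinom := by
    exact_mod_cast Nat.succ_mul_centralBinom_succ k
  have hcat : ((k + 1 : ℕ) : ℚ) * catalan k = k.centralBinom := by
    exact_mod_cast succ_mul_catalan_eq_centralBinom k
  have h : ((k + 1).centralBinom : ℚ) = 2 * (2 * k + 1) * catalan k :=
    mul_left_cancel₀ (by positivity : ((k + 1 : ℕ) : ℚ) ≠ 0) (by rw [hcb, ← hcat]; ring)
  simp only [sqrtCoeff, ← Nat.centralBinom_eq_two_mul_choose]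
  rw [h]
  push_cast
  rw [show 2 * ((k : ℚ) + 1) - 1 = 2 * k + 1 by ring, div_pow]
  field_simp
  ring

lemma det_sqrtCoeff_hankel_ne_zero {K : Type*} [Field K] [CharZero K] {e : ℕ} (he : e ≤ 1)
    (m : ℕ) : (of fun i j : Fin m => (sqrtCoeff (i + j + e + 1) : K)).det ≠ 0 := by
  set d : Fin m → K := fun i => (-1 / 4) ^ (i : ℕ)
  have hM : (of fun i j : Fin m => (sqrtCoeff (i + j + e + 1) : K)) = ((-1 / 4) ^ e / 2 : K) •
      (diagonal d * (of fun i j : Fin m => (catalan (i + j + e) : K)) * diagonal d) := by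
    ext i j
    simp only [sqrtCoeff_succ_eq_catalan, d, Matrix.smul_apply, diagonal_mul, mul_diagonal,
      of_apply, smul_eq_mul]
    push_cast
    ring
  rw [hM, det_smul, det_mul, det_mul, det_diagonal, det_catalan_hankel he]
  have hd : ∏ i, d i ≠ 0 := prod_ne_zero_iff.mpr fun i _ => by simp [d]
  simp [hd]

lemma natDegree_det_Bpoly_self {a : ℝ} (ha : a ≠ 0) {e : ℕ} (he : e ≤ 1) (m : ℕ) :
    (of fun i j : Fin m => Bpoly a a (i + j + e + 2)).det.natDegree = m := by
  set S : Matrix (Fin m) (Fin m) ℝ := of fun i j => (sqrtCoeff (i + j + e + 1) : ℝ)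
  set A : Matrix (Fin m) (Fin m) ℝ := of fun i j =>
    (sqrtCoeff (i + j + e + 2) : ℝ) + sqrtCoeff (i + j + e + 1)
  have hM : (of fun i j : Fin m => Bpoly a a (i + j + e + 2))
      = (X : ℝ[X]) • (-a⁻¹ • S).map C + A.map C := by
    ext i j : 1
    simp only [S, A, of_apply, Matrix.add_apply, Matrix.smul_apply, Matrix.map_apply, smul_eq_mul,
      Bpoly_self_succ ha, C_mul, C_neg]
    ring
  have hdeg := natDegree_det_X_add_C_le (-a⁻¹ • S) A
  have hcoeff := coeff_det_X_add_C_card (-a⁻¹ • S) A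
  rw [Fintype.card_fin] at hdeg hcoeff
  rw [hM]
  refine natDegree_eq_of_le_of_coeff_ne_zero hdeg ?_
  rw [hcoeff, det_smul]
  exact mul_ne_zero (pow_ne_zero _ (by simpa using ha)) (det_sqrtCoeff_hankel_ne_zero he m)

theorem cayleyPoly_natDegree_circle_general (a : ℝ) (ha : a ≠ 0) (n : ℕ) :
    (cayleyPoly a a n).natDegree = if Odd n then (n - 1) / 2 else n / 2 - 1 := by
  by_cases hodd : Odd n
  · obtain ⟨m, rfl⟩ := hodd
    rw [cayleyPoly, if_pos ⟨m, rfl⟩, if_pos ⟨m, rfl⟩, show (2 * m + 1) / 2 = m by omega,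
      show (2 * m + 1 - 1) / 2 = m by omega]
    simpa using natDegree_det_Bpoly_self ha (e := 0) zero_le_one m
  · obtain ⟨m, rfl⟩ := Nat.not_odd_iff_even.mp hodd
    rw [cayleyPoly, if_neg hodd, if_neg hodd, show (m + m) / 2 - 1 = m - 1 by omega]
    exact natDegree_det_Bpoly_self ha le_rfl (m - 1)

/-- The case of the circle (Proposition 2.25): for `a = b` the degree of `𝓑_{a,a}^n`
equals `(n−1)/2` if `n` is odd and `n/2 − 1` if `n` is even. -/
theorem cayleyPoly_natDegree_circle (a : ℝ) (ha : a ≠ 0) (n : ℕ) (hn : 3 ≤ n) :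
    (cayleyPoly a a n).natDegree = if Odd n then (n - 1) / 2 else n / 2 - 1 :=
  cayleyPoly_natDegree_circle_general a ha n
end
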